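/- Let n be large enough that a level-n harmonic immersion i_n : S² → ℝ^{2n+1} is an immersion. Then for all x, y ∈ S², the orthogonal projection p of the vector i_n(x) − i_n(y) onto the tangent space of the immersed surface at i_n(y) (i.e. onto the range of the manifold derivative of i_n at y) satisfies ‖p‖² = (P_n'(⟨x, y⟩))² (1 − ⟨x, y⟩²) / P_n'(1). -/

import Mathlib

open Real Metric Module
open scoped Manifold RealInnerProductSpace

instance : Fact (finrank ℝ (EuclideanSpace ℝ (Fin 3)) = 2 + 1) :=
  ⟨finrank_euclideanSpace_fin⟩

/-- The degree-`n` Legendre polynomial, via the Rodrigues formula. -/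
noncomputable def legendre (n : ℕ) (x : ℝ) : ℝ :=
  (1 / (2 ^ n * (n.factorial : ℝ))) * iteratedDeriv n (fun t : ℝ => (t ^ 2 - 1) ^ n) x

/-- The manifold derivative of a map from `S² ⊂ ℝ³` into `ℝ^k`, viewed as a continuous
linear map from the (model) tangent space `ℝ²` to `ℝ^k`. -/
noncomputable def sphereMfderiv2 (k : ℕ)
    (i : sphere (0 : EuclideanSpace ℝ (Fin 3)) 1 → EuclideanSpace ℝ (Fin k))
    (y : sphere (0 : EuclideanSpace ℝ (Fin 3)) 1) :
    EuclideanSpace ℝ (Fin 2) →L[ℝ] EuclideanSpace ℝ (Fin k) :=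
  mfderiv (𝓡 2) 𝓘(ℝ, EuclideanSpace ℝ (Fin k)) i y

/-!
Write `D` and `J` for the differentials at `y` of `i` and of the inclusion `S² ⊂ ℝ³`.
Differentiating the kernel identity `⟪i x, i z⟫ = P ⟪x, z⟫` in `z` at `y` gives
`⟪i x, D v⟫ = P' ⟪x, y⟫ * ⟪x, J v⟫`; differentiating this once more, now in `x` at `y`, shows that
`D` is conformal: `⟪D v, D w⟫ = P' 1 * ⟪J v, J w⟫`. Since `J` maps onto `y^⊥`, there is `v₀` with
`J v₀ = x - ⟪x, y⟫ • y`, and then `⟪i x - i y, D v⟫ = P' ⟪x, y⟫ * ⟪J v₀, J v⟫` for all `v`. Hence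
the projection of `i x - i y` is `(P' ⟪x, y⟫ / P' 1) • D v₀`, whose squared norm is
`P' ⟪x, y⟫ ^ 2 * ‖x - ⟪x, y⟫ • y‖ ^ 2 / P' 1`.
-/

open scoped ContDiff

theorem contDiff_legendre (n : ℕ) : ContDiff ℝ ∞ (legendre n) := by
  unfold legendre
  rw [iteratedDeriv_eq_iterate]
  exact contDiff_const.mul
    ((by fun_prop : ContDiff ℝ ∞ fun t : ℝ => (t ^ 2 - 1) ^ n).iterate_deriv n)

section Projection

variable {V E F : Type*} [AddCommGroup V] [Module ℝ V]
  [NormedAddCommGroup E] [InnerProductSpace ℝ E] [NormedAddCommGroup F] [InnerProductSpace ℝ F]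

theorem norm_orthogonalProjectionOnto_range_sq (D : V →ₗ[ℝ] F)
    [(LinearMap.range D).HasOrthogonalProjection] (J : V → E) {a c : ℝ} {u : F} {v₀ : V}
    (hD : ∀ v w, ⟪D v, D w⟫ = c * ⟪J v, J w⟫) (hu : ∀ v, ⟪u, D v⟫ = a * ⟪J v₀, J v⟫) :
    ‖((LinearMap.range D).orthogonalProjectionOnto u : F)‖ ^ 2 = a ^ 2 * ‖J v₀‖ ^ 2 / c := by
  -- For `c = 0` the map `D` vanishes and both sides are `0`, the right one as a division by zero.
  rcases eq_or_ne c 0 with rfl | hc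
  · obtain ⟨w, hw⟩ := ((LinearMap.range D).orthogonalProjectionOnto u).2
    have hDw : D w = 0 := inner_self_eq_zero.mp (by rw [hD, zero_mul])
    rw [← hw, hDw, div_zero, norm_zero, sq, mul_zero]
  have hproj : ((LinearMap.range D).orthogonalProjectionOnto u : F) = (a / c) • D v₀ := by
    rw [← Submodule.starProjection_apply]
    refine Submodule.eq_starProjection_of_mem_of_inner_eq_zero
      (Submodule.smul_mem _ _ (LinearMap.mem_range_self D v₀)) ?_
    rintro _ ⟨w, rfl⟩
    rw [inner_sub_left, real_inner_smul_left, hu, hD]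
    field_simp
    ring
  rw [hproj, norm_smul, mul_pow, ← real_inner_self_eq_norm_sq (D v₀), hD,
    real_inner_self_eq_norm_sq, Real.norm_eq_abs, sq_abs]
  field_simp

theorem norm_sub_inner_smul_sq_of_norm_eq_one {x y : E} (hx : ‖x‖ = 1) (hy : ‖y‖ = 1) :
    ‖x - ⟪x, y⟫ • y‖ ^ 2 = 1 - ⟪x, y⟫ ^ 2 := by
  rw [norm_sub_sq_real, real_inner_smul_right, norm_smul, hx, hy, Real.norm_eq_abs]
  ring_nf
  rw [sq_abs]
  ring

end Projection

instance TangentSpace.finiteDimensional {𝕜 E H M : Type*} [NontriviallyNormedField 𝕜]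
    [NormedAddCommGroup E] [NormedSpace 𝕜 E] [FiniteDimensional 𝕜 E] [TopologicalSpace H]
    {I : ModelWithCorners 𝕜 E H} [TopologicalSpace M] [ChartedSpace H M] (x : M) :
    FiniteDimensional 𝕜 (TangentSpace I x) :=
  ‹FiniteDimensional 𝕜 E›

section Sphere

variable {E F G : Type*} [NormedAddCommGroup E] [InnerProductSpace ℝ E] {m : ℕ}
  [Fact (finrank ℝ E = m + 1)] [NormedAddCommGroup F] [InnerProductSpace ℝ F]
  [NormedAddCommGroup G] [NormedSpace ℝ G]

theorem HasFDerivAt.hasMFDerivAt_comp_coe_sphere {φ : E → G} {φ' : E →L[ℝ] G}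
    {y : sphere (0 : E) 1} (hφ : HasFDerivAt φ φ' y) :
    HasMFDerivAt (𝓡 m) 𝓘(ℝ, G) (fun z : sphere (0 : E) 1 => φ z) y
      (φ'.comp (mvfderiv (𝓡 m) ((↑) : sphere (0 : E) 1 → E) y)) :=
  hφ.hasMFDerivAt.comp y ((contMDiff_coe_sphere y).mdifferentiableAt one_ne_zero).hasMFDerivAt

theorem inner_mvfderiv_coe_sphere (y : sphere (0 : E) 1) (v : TangentSpace (𝓡 m) y) :
    ⟪(y : E), mvfderiv (𝓡 m) ((↑) : sphere (0 : E) 1 → E) y v⟫ = 0 :=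
  Submodule.inner_right_of_mem_orthogonal (Submodule.mem_span_singleton_self _)
    (range_mvfderiv_subtypeVal (n := m) y ▸ LinearMap.mem_range_self _ v)

theorem exists_mvfderiv_coe_sphere_eq_sub_inner_smul (x y : sphere (0 : E) 1) :
    ∃ v : TangentSpace (𝓡 m) y,
      mvfderiv (𝓡 m) ((↑) : sphere (0 : E) 1 → E) y v = x - ⟪(x : E), y⟫ • (y : E) := by
  have hmem : (x : E) - ⟪(x : E), y⟫ • (y : E) ∈ (ℝ ∙ (y : E))ᗮ := by
    rw [real_inner_comm, ← Submodule.starProjection_unit_singleton ℝ (norm_eq_of_mem_sphere y)]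
    exact Submodule.sub_starProjection_mem_orthogonal _
  rw [← range_mvfderiv_subtypeVal (n := m) y] at hmem
  exact hmem

variable {f : sphere (0 : E) 1 → F} {K : ℝ → ℝ} {y : sphere (0 : E) 1}

theorem inner_mvfderiv_of_inner_eq_comp_inner
    (hK : ∀ x y, ⟪f x, f y⟫ = K ⟪(x : E), y⟫) (hf : MDifferentiableAt (𝓡 m) 𝓘(ℝ, F) f y)
    (x : sphere (0 : E) 1) (hKx : DifferentiableAt ℝ K ⟪(x : E), y⟫)
    (v : TangentSpace (𝓡 m) y) :
    ⟪f x, mvfderiv (𝓡 m) f y v⟫ =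
      deriv K ⟪(x : E), y⟫ * ⟪(x : E), mvfderiv (𝓡 m) ((↑) : sphere (0 : E) 1 → E) y v⟫ := by
  have hfun : (fun z : sphere (0 : E) 1 => K ⟪(x : E), z⟫) = innerSL ℝ (f x) ∘ f :=
    funext fun z => (hK x z).symm
  have hleft : HasMFDerivAt (𝓡 m) 𝓘(ℝ, ℝ) (fun z : sphere (0 : E) 1 => K ⟪(x : E), z⟫) y
      ((innerSL ℝ (f x)).comp (mvfderiv (𝓡 m) f y)) :=
    hfun ▸ (innerSL ℝ (f x)).hasFDerivAt.hasMFDerivAt.comp y hf.hasMFDerivAt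
  have hright := (hKx.hasDerivAt.comp_hasFDerivAt (y : E)
    (innerSL ℝ (x : E)).hasFDerivAt).hasMFDerivAt_comp_coe_sphere (m := m)
  exact DFunLike.congr_fun (hleft.mfderiv.symm.trans hright.mfderiv) v

theorem inner_mvfderiv_mvfderiv_of_inner_eq_comp_inner
    (hK : ∀ x y, ⟪f x, f y⟫ = K ⟪(x : E), y⟫) (hf : MDifferentiableAt (𝓡 m) 𝓘(ℝ, F) f y)
    (hKd : Differentiable ℝ K) (hK'd : DifferentiableAt ℝ (deriv K) 1)
    (v w : TangentSpace (𝓡 m) y) :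
    ⟪mvfderiv (𝓡 m) f y v, mvfderiv (𝓡 m) f y w⟫ =
      deriv K 1 * ⟪mvfderiv (𝓡 m) ((↑) : sphere (0 : E) 1 → E) y v,
        mvfderiv (𝓡 m) ((↑) : sphere (0 : E) 1 → E) y w⟫ := by
  have hA z := inner_mvfderiv_of_inner_eq_comp_inner hK hf z (hKd _) v
  have hyw := inner_mvfderiv_coe_sphere y w
  set D := mvfderiv (𝓡 m) f y
  set J := mvfderiv (𝓡 m) ((↑) : sphere (0 : E) 1 → E) y
  have hyy : ⟪(y : E), y⟫ = 1 := inner_self_eq_one_of_norm_eq_one (norm_eq_of_mem_sphere y)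
  have hfun : (fun z : sphere (0 : E) 1 => deriv K ⟪(y : E), z⟫ * ⟪J v, z⟫) =
      innerSL ℝ (D v) ∘ f := by
    funext z
    rw [Function.comp_apply, innerSL_apply_apply, real_inner_comm (f z), hA,
      real_inner_comm (y : E), real_inner_comm (J v)]
  have hleft : HasMFDerivAt (𝓡 m) 𝓘(ℝ, ℝ)
      (fun z : sphere (0 : E) 1 => deriv K ⟪(y : E), z⟫ * ⟪J v, z⟫) y
      ((innerSL ℝ (D v)).comp D) :=
    hfun ▸ (innerSL ℝ (D v)).hasFDerivAt.hasMFDerivAt.comp y hf.hasMFDerivAt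
  rw [← hyy] at hK'd
  have hright := ((hK'd.hasDerivAt.comp_hasFDerivAt (y : E)
    (innerSL ℝ (y : E)).hasFDerivAt).mul
      (innerSL ℝ (J v)).hasFDerivAt).hasMFDerivAt_comp_coe_sphere (m := m)
  -- The second-order term carries the factor `⟪y, J w⟫ = 0`.
  have hvw : ⟪D v, D w⟫ = deriv K ⟪(y : E), y⟫ * ⟪J v, J w⟫ +
      ⟪J v, y⟫ * (deriv (deriv K) ⟪(y : E), y⟫ * ⟪(y : E), J w⟫) :=
    DFunLike.congr_fun (hleft.mfderiv.symm.trans hright.mfderiv) w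
  rw [hvw, hyy, hyw, mul_zero, mul_zero, add_zero]

theorem norm_orthogonalProjectionOnto_range_mvfderiv_sq
    (hK : ∀ x y, ⟪f x, f y⟫ = K ⟪(x : E), y⟫) (hf : MDifferentiableAt (𝓡 m) 𝓘(ℝ, F) f y)
    (hKd : Differentiable ℝ K) (hK'd : DifferentiableAt ℝ (deriv K) 1) (x : sphere (0 : E) 1) :
    ‖((LinearMap.range (mvfderiv (𝓡 m) f y : TangentSpace (𝓡 m) y →ₗ[ℝ] F)).orthogonalProjectionOnto
        (f x - f y) : F)‖ ^ 2 =
      deriv K ⟪(x : E), y⟫ ^ 2 * (1 - ⟪(x : E), y⟫ ^ 2) / deriv K 1 := by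
  obtain ⟨v₀, hv₀⟩ := exists_mvfderiv_coe_sphere_eq_sub_inner_smul (m := m) x y
  have hu : ∀ v, ⟪f x - f y, mvfderiv (𝓡 m) f y v⟫ = deriv K ⟪(x : E), y⟫ *
      ⟪mvfderiv (𝓡 m) ((↑) : sphere (0 : E) 1 → E) y v₀,
        mvfderiv (𝓡 m) ((↑) : sphere (0 : E) 1 → E) y v⟫ := by
    intro v
    rw [inner_sub_left, inner_mvfderiv_of_inner_eq_comp_inner hK hf x (hKd _),
      inner_mvfderiv_of_inner_eq_comp_inner hK hf y (hKd _), hv₀, inner_sub_left,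
      real_inner_smul_left, inner_mvfderiv_coe_sphere]
    ring
  rw [norm_orthogonalProjectionOnto_range_sq _ _
    (inner_mvfderiv_mvfderiv_of_inner_eq_comp_inner hK hf hKd hK'd) hu, hv₀,
    norm_sub_inner_smul_sq_of_norm_eq_one (norm_eq_of_mem_sphere x) (norm_eq_of_mem_sphere y)]

end Sphere

theorem norm_sq_tangential_projection_general (n : ℕ)
    (i : sphere (0 : EuclideanSpace ℝ (Fin 3)) 1 → EuclideanSpace ℝ (Fin (2 * n + 1)))
    (hsmooth : ContMDiff (𝓡 2) 𝓘(ℝ, EuclideanSpace ℝ (Fin (2 * n + 1))) (⊤ : ℕ∞) i)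
    (hkernel : ∀ x y : sphere (0 : EuclideanSpace ℝ (Fin 3)) 1,
      ⟪i x, i y⟫ = legendre n ⟪(x : EuclideanSpace ℝ (Fin 3)), (y : EuclideanSpace ℝ (Fin 3))⟫) :
    ∀ x y : sphere (0 : EuclideanSpace ℝ (Fin 3)) 1,
      ‖(Submodule.orthogonalProjectionOnto (LinearMap.range (sphereMfderiv2 (2 * n + 1) i y :
            EuclideanSpace ℝ (Fin 2) →ₗ[ℝ] EuclideanSpace ℝ (Fin (2 * n + 1))))
          (i x - i y) : EuclideanSpace ℝ (Fin (2 * n + 1)))‖ ^ 2 =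
        (deriv (legendre n) ⟪(x : EuclideanSpace ℝ (Fin 3)), (y : EuclideanSpace ℝ (Fin 3))⟫) ^ 2 *
          (1 - ⟪(x : EuclideanSpace ℝ (Fin 3)), (y : EuclideanSpace ℝ (Fin 3))⟫ ^ 2) /
          deriv (legendre n) 1 := by
  intro x y
  have hP := contDiff_legendre n
  exact norm_orthogonalProjectionOnto_range_mvfderiv_sq hkernel
    (hsmooth.mdifferentiableAt (by simp)) (hP.differentiable (by simp))
    ((contDiff_infty_iff_deriv.mp hP).2.differentiable (by simp) 1) x

/-- For a level-`n` harmonic immersion `i_n : S² → ℝ^{2n+1}`, the orthogonal projection `p`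
of `i_n x − i_n y` onto the tangent space at `i_n y` (the range of the manifold derivative of
`i_n` at `y`) satisfies `‖p‖² = P_n'(⟨x,y⟩)² (1 − ⟨x,y⟩²)/P_n'(1)`. -/
theorem norm_sq_tangential_projection (n : ℕ)
    (i : sphere (0 : EuclideanSpace ℝ (Fin 3)) 1 → EuclideanSpace ℝ (Fin (2 * n + 1)))
    (hsmooth : ContMDiff (𝓡 2) 𝓘(ℝ, EuclideanSpace ℝ (Fin (2 * n + 1))) (⊤ : ℕ∞) i)
    (hkernel : ∀ x y : sphere (0 : EuclideanSpace ℝ (Fin 3)) 1,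
      ⟪i x, i y⟫ = legendre n ⟪(x : EuclideanSpace ℝ (Fin 3)), (y : EuclideanSpace ℝ (Fin 3))⟫)
    (himm : ∀ y : sphere (0 : EuclideanSpace ℝ (Fin 3)) 1,
      Function.Injective (sphereMfderiv2 (2 * n + 1) i y)) :
    ∀ x y : sphere (0 : EuclideanSpace ℝ (Fin 3)) 1,
      ‖(Submodule.orthogonalProjectionOnto (LinearMap.range (sphereMfderiv2 (2 * n + 1) i y :
            EuclideanSpace ℝ (Fin 2) →ₗ[ℝ] EuclideanSpace ℝ (Fin (2 * n + 1))))
          (i x - i y) : EuclideanSpace ℝ (Fin (2 * n + 1)))‖ ^ 2 =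
        (deriv (legendre n) ⟪(x : EuclideanSpace ℝ (Fin 3)), (y : EuclideanSpace ℝ (Fin 3))⟫) ^ 2 *
          (1 - ⟪(x : EuclideanSpace ℝ (Fin 3)), (y : EuclideanSpace ℝ (Fin 3))⟫ ^ 2) /
          deriv (legendre n) 1 :=
  norm_sq_tangential_projection_general n i hsmooth hkernel
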